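/- arXiv:1305.4906 — 3 statements merged into one kernel-verified Lean document; each statement's English description precedes it below -/
import Mathlib

section
/- Let (V,q) be a quadratic space over a field k of characteristic ≠ 2 and let t be an isometry of (V,q). Then the minimal polynomial f of t satisfies f(X) = ε·X^{deg f}·f(1/X) with ε = f(0) ∈ {1,−1}, and likewise the characteristic polynomial F of t satisfies F(X) = F(0)·X^{deg F}·F(1/X) with F(0) ∈ {1,−1}. -/
/-!
Nondegeneracy of `B` makes `t⁻¹` the adjoint of `t`. An endomorphism and its adjoint have the
same minimal polynomial (a polynomial kills one iff it kills the other) and the same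
characteristic polynomial (the adjoint is conjugate, through `B : V ≃ V*`, to the dual map). On
the other hand the minimal and characteristic polynomials of `t⁻¹` are `f*` and `F*`. Hence
`f = f*` and `F = F*`, and comparing constant terms in `f = f(0)⁻¹ X^{deg f} f(1/X)` gives
`f(0)² = 1`.
-/

open Polynomial

noncomputable section

variable {k : Type} [Field k]

/-- `f*(X) = f(0)⁻¹ X^{deg f} f(1/X)`. -/
def starPoly (f : k[X]) : k[X] := Polynomial.C (f.coeff 0)⁻¹ * f.reverse

/-- Type 0 : a product of powers of `X - 1` and `X + 1`. -/
def IsType0Pol (f : k[X]) : Prop := ∃ a b : ℕ, f = (X - 1 : k[X]) ^ a * (X + 1) ^ b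

/-- Type 1 : a product of (powers of) monic symmetric irreducible polynomials of even degree. -/
def IsType1Pol (f : k[X]) : Prop :=
  ∃ s : Multiset k[X],
    (∀ g ∈ s, g.Monic ∧ Irreducible g ∧ g = g.reverse ∧ Even g.natDegree) ∧ f = s.prod

/-- Type 2 : a product of polynomials `g * g*` with `g` monic irreducible, `g ≠ ±g*`. -/
def IsType2Pol (f : k[X]) : Prop :=
  ∃ s : Multiset k[X],
    (∀ g ∈ s, g.Monic ∧ Irreducible g ∧ g ≠ starPoly g ∧ g ≠ -starPoly g) ∧
    f = (s.map fun g => g * starPoly g).prod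

/-- A monic polynomial is hyperbolic if it is of the form `G·G*`; equivalently, all its
components of type 0 and 1 occur with an even exponent. -/
def IsHyperbolicPoly (f : k[X]) : Prop := ∃ g : k[X], g.Monic ∧ f = g * starPoly g

/-- Data describing a self-dual torsion `k[X]`-module which is finite dimensional over `k`:
the direct sum, over `i`, of `[k[X]/(f i ^ e i)]^(n i)`, where each `f i` is monic
irreducible, and where the collection is self-dual (stable under `f ↦ f*`). -/
structure ModuleData (k : Type) [Field k] where
  ι : Type
  [fin : Fintype ι]
  f : ι → k[X]
  e : ι → ℕ
  n : ι → ℕ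
  monic : ∀ i, (f i).Monic
  irr : ∀ i, Irreducible (f i)
  epos : ∀ i, 0 < e i
  npos : ∀ i, 0 < n i
  selfdual : ∃ σ : Equiv.Perm ι,
    ∀ i, f (σ i) = starPoly (f i) ∧ e (σ i) = e i ∧ n (σ i) = n i

attribute [instance] ModuleData.fin

namespace ModuleData

variable (D : ModuleData k)

/-- The underlying `K[X]`-module of `M ⊗_k K`, realised concretely, for an extension
`ι : k →+* K`. -/
abbrev SpaceVia {K : Type} [Field K] (ι : k →+* K) : Type :=
  (i : D.ι) → Fin (D.n i) →
    (Polynomial K ⧸ Ideal.span {((D.f i).map ι) ^ D.e i})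

/-- The dimension of `M` as a `k`-vector space. -/
def dim : ℕ := ∑ i, D.n i * (D.e i * (D.f i).natDegree)

/-- The characteristic polynomial `F_M` of `M`. -/
def charPoly : k[X] := ∏ i, D.f i ^ (D.n i * D.e i)

/-- The summand `i` is of type 0 : `f i` is `X - 1` or `X + 1`. -/
def IsIdx0 (i : D.ι) : Prop := D.f i = X - 1 ∨ D.f i = X + 1

/-- The summand `i` is of type 1 : `f i` is symmetric of even degree. -/
def IsIdx1 (i : D.ι) : Prop := D.f i = (D.f i).reverse ∧ Even (D.f i).natDegree

/-- The summand `i` is of type 2 : `f i` is not self-dual. -/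
def IsIdx2 (i : D.ι) : Prop := D.f i ≠ starPoly (D.f i)

open Classical in
/-- `dim_k M⁰`. -/
def dim0 : ℕ := ∑ i, if D.IsIdx0 i then D.n i * (D.e i * (D.f i).natDegree) else 0

open Classical in
/-- `dim_k M¹`. -/
def dim1 : ℕ := ∑ i, if D.IsIdx1 i then D.n i * (D.e i * (D.f i).natDegree) else 0

open Classical in
/-- `dim_k M²`. -/
def dim2 : ℕ := ∑ i, if D.IsIdx2 i then D.n i * (D.e i * (D.f i).natDegree) else 0

/-- `M` is semi-simple : all exponents are 1. -/
def Semisimple : Prop := ∀ i, D.e i = 1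

/-- `M̄_odd` : the direct sum of the summands `[k[X]/(f)]^n`, over those summands
`[k[X]/(f^e)]^n` of `M` with `e` odd and `f` self-dual (`f = f*`). -/
def oddBar : ModuleData k where
  ι := {i : D.ι // Odd (D.e i) ∧ D.f i = starPoly (D.f i)}
  fin := by classical exact inferInstance
  f i := D.f i.1
  e _ := 1
  n i := D.n i.1
  monic i := D.monic i.1
  irr i := D.irr i.1
  epos _ := one_pos
  npos i := D.npos i.1
  selfdual := ⟨Equiv.refl _, fun i => ⟨i.2.2, rfl, rfl⟩⟩

end ModuleData

theorem starPoly_eq_self_of_symm {f : k[X]} (hm : f.Monic) (hs : f = f.reverse) :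
    starPoly f = f := by
  have h0 : f.coeff 0 = 1 := by
    conv_lhs => rw [hs]
    rw [Polynomial.coeff_zero_reverse]
    exact hm
  rw [starPoly, h0, inv_one, map_one, one_mul, ← hs]

/-- The module `[k[X]/(f)]^m` for a monic symmetric irreducible `f`. -/
def ModuleData.single (f : k[X]) (hmon : f.Monic) (hirr : Irreducible f)
    (hsym : f = f.reverse) (m : ℕ) (hm : 0 < m) : ModuleData k where
  ι := Unit
  fin := inferInstance
  f _ := f
  e _ := 1
  n _ := m
  monic _ := hmon
  irr _ := hirr
  epos _ := one_pos
  npos _ := hm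
  selfdual := ⟨Equiv.refl _, fun _ => ⟨(starPoly_eq_self_of_symm hmon hsym).symm, rfl, rfl⟩⟩

section Bilin

variable {V : Type} [AddCommGroup V] [Module k V]

/-- `t` is an isometry of the bilinear space `(V, B)`. -/
def IsIsometryOf (B : LinearMap.BilinForm k V) (t : V ≃ₗ[k] V) : Prop :=
  ∀ x y, B (t x) (t y) = B x y

/-- `(V, B)` is a quadratic space : `B` is a symmetric bilinear form of non-zero
determinant (equivalently, non-degenerate). -/
def IsQuadraticSpace (B : LinearMap.BilinForm k V) : Prop :=
  (∀ x y, B x y = B y x) ∧ (∀ x, (∀ y, B x y = 0) → x = 0)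

/-- The bilinear space `(W, B)` over an extension `ι : k →+* K` has an isometry whose
associated `K[X]`-module is `M ⊗_k K`. -/
def HasIsometryWithModuleVia {K : Type} [Field K] (ι : k →+* K)
    {W : Type} [AddCommGroup W] [Module K W]
    (B : LinearMap.BilinForm K W) (D : ModuleData k) : Prop :=
  ∃ t : W ≃ₗ[K] W, IsIsometryOf B t ∧
    ∃ φ : W ≃ₗ[K] D.SpaceVia ι, ∀ w, φ (t w) = (X : Polynomial K) • φ w

/-- `(V, B)` has an isometry with module `M`. -/
def HasIsometryWithModule (B : LinearMap.BilinForm k V) (D : ModuleData k) : Prop :=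
  HasIsometryWithModuleVia (RingHom.id k) B D

/-- The bilinear space `(W, B)` over an extension `ι : k →+* K` has an isometry with
minimal polynomial (the image of) `f`. -/
def HasIsometryWithMinpolyVia {K : Type} [Field K] (ι : k →+* K)
    {W : Type} [AddCommGroup W] [Module K W]
    (B : LinearMap.BilinForm K W) (f : k[X]) : Prop :=
  ∃ t : W ≃ₗ[K] W, IsIsometryOf B t ∧ minpoly K t.toLinearMap = f.map ι

/-- `(V, B)` has an isometry with minimal polynomial `f`. -/
def HasIsometryWithMinpoly (B : LinearMap.BilinForm k V) (f : k[X]) : Prop :=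
  ∃ t : V ≃ₗ[k] V, IsIsometryOf B t ∧ minpoly k t.toLinearMap = f

/-- A (2n)-dimensional quadratic space is hyperbolic if it has a self-orthogonal subspace
of dimension n. -/
def IsHyperbolicSpace (B : LinearMap.BilinForm k V) : Prop :=
  ∃ W : Submodule k V, (∀ x ∈ W, ∀ y ∈ W, B x y = 0) ∧
    2 * Module.finrank k W = Module.finrank k V

/-- The Witt index : the largest dimension of a totally isotropic subspace. -/
def wittIndex (B : LinearMap.BilinForm k V) : ℕ :=
  sSup {m | ∃ W : Submodule k V, (∀ x ∈ W, ∀ y ∈ W, B x y = 0) ∧ Module.finrank k W = m}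

variable [FiniteDimensional k V]

/-- The Gram matrix of `B` with respect to a fixed basis. -/
def gramOf (B : LinearMap.BilinForm k V) :
    Matrix (Fin (Module.finrank k V)) (Fin (Module.finrank k V)) k :=
  LinearMap.toMatrix₂ (Module.finBasis k V) (Module.finBasis k V) B

/-- The determinant of `B` (well defined modulo nonzero squares). -/
def detOf (B : LinearMap.BilinForm k V) : k := (gramOf B).det

end Bilin

open LinearMap

section StarPoly

variable {f g : k[X]}

theorem monic_starPoly (hf : f.coeff 0 ≠ 0) : (starPoly f).Monic := by
  have htrail : f.trailingCoeff = f.coeff 0 := by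
    rw [trailingCoeff, natTrailingDegree_eq_zero.mpr (Or.inr hf)]
  rw [Monic.def, starPoly, leadingCoeff_mul, leadingCoeff_C, reverse_leadingCoeff, htrail,
    inv_mul_cancel₀ hf]

theorem eq_starPoly_of_dvd_reverse (hf : f.Monic) (hg : g.Monic) (hgf : g ∣ f.reverse)
    (hfg : f ∣ g.reverse) : g = starPoly f := by
  have hfg_deg : f.natDegree ≤ g.natDegree :=
    (natDegree_le_of_dvd hfg (reverse_eq_zero.not.mpr hg.ne_zero)).trans (reverse_natDegree_le g)
  have hgf_deg : g.natDegree ≤ f.natDegree - f.natTrailingDegree :=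
    reverse_natDegree f ▸ natDegree_le_of_dvd hgf (reverse_eq_zero.not.mpr hf.ne_zero)
  have hf0 : f.coeff 0 ≠ 0 := by
    have := f.natTrailingDegree_le_natDegree
    exact (natTrailingDegree_eq_zero.mp (by omega)).resolve_left hf.ne_zero
  refine (eq_of_monic_of_dvd_of_natDegree_le hg (monic_starPoly hf0)
    (dvd_mul_of_dvd_right hgf _) ?_).symm
  calc (starPoly f).natDegree ≤ f.reverse.natDegree := natDegree_C_mul_le _ _
    _ ≤ f.natDegree := reverse_natDegree_le f
    _ ≤ g.natDegree := hfg_deg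

theorem eq_C_mul_reverse_of_starPoly_eq (hf : f.Monic) (h : starPoly f = f) :
    f = C (f.coeff 0) * f.reverse ∧ (f.coeff 0 = 1 ∨ f.coeff 0 = -1) := by
  have hinv : (f.coeff 0)⁻¹ = f.coeff 0 := by
    conv_rhs => rw [← h]
    rw [starPoly, coeff_C_mul, coeff_zero_reverse, hf.leadingCoeff, mul_one]
  have hsq : f.coeff 0 * f.coeff 0 = 1 := by
    have hf0 : f.coeff 0 ≠ 0 := by
      intro h0
      rw [starPoly, h0, inv_zero, C_0, zero_mul] at h
      exact hf.ne_zero h.symm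
    simpa only [hinv] using inv_mul_cancel₀ hf0
  refine ⟨?_, mul_self_eq_one_iff.mp hsq⟩
  conv_lhs => rw [← h, starPoly, hinv]

end StarPoly

theorem aeval_reflect_of_mul_eq_one {R A : Type*} [CommSemiring R] [Semiring A] [Algebra R A]
    {x y : A} (hxy : x * y = 1) {f : R[X]} {N : ℕ} (hf : f.natDegree ≤ N) :
    aeval x (reflect N f) = x ^ N * aeval y f := by
  have hpow : ∀ n, x ^ n * y ^ n = 1 := fun n => by
    induction n with
    | zero => simp
    | succ n ih => rw [pow_succ' x, pow_succ y, mul_assoc, ← mul_assoc (x ^ n), ih, one_mul, hxy]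
  refine induction_with_natDegree_le (fun f => aeval x (reflect N f) = x ^ N * aeval y f) N
    (by simp) (fun n r _ hn => ?_) (fun f g _ _ hf hg => ?_) f hf
  · rw [reflect_C_mul_X_pow, revAt_le hn, C_mul_X_pow_eq_monomial, C_mul_X_pow_eq_monomial,
      aeval_monomial, aeval_monomial, ← mul_assoc, ← Algebra.commutes, mul_assoc]
    congr 1
    calc x ^ (N - n) = x ^ (N - n) * (x ^ n * y ^ n) := by rw [hpow, mul_one]
      _ = x ^ N * y ^ n := by rw [← mul_assoc, ← pow_add, Nat.sub_add_cancel hn]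
  · rw [reflect_add, map_add, map_add, hf, hg, mul_add]

section Inverse

variable {A : Type*} [Ring A] [Algebra k A] {x y : A}

theorem minpoly_dvd_reverse_of_mul_eq_one (hyx : y * x = 1) :
    minpoly k y ∣ (minpoly k x).reverse :=
  minpoly.dvd k y <| by
    rw [reverse, aeval_reflect_of_mul_eq_one hyx le_rfl, minpoly.aeval, mul_zero]

theorem minpoly_eq_starPoly_of_mul_eq_one [Algebra.IsIntegral k A] (hxy : x * y = 1)
    (hyx : y * x = 1) : minpoly k y = starPoly (minpoly k x) :=
  eq_starPoly_of_dvd_reverse (minpoly.monic (Algebra.IsIntegral.isIntegral x))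
    (minpoly.monic (Algebra.IsIntegral.isIntegral y))
    (minpoly_dvd_reverse_of_mul_eq_one hyx) (minpoly_dvd_reverse_of_mul_eq_one hxy)

end Inverse

section AdjointPair

variable {R M : Type*} [CommRing R] [AddCommGroup M] [Module R M] {B : LinearMap.BilinForm R M}
  {φ ψ : Module.End R M}

theorem LinearMap.IsAdjointPair.aeval (h : IsAdjointPair B B ψ φ) (p : R[X]) :
    IsAdjointPair B B (aeval ψ p) (aeval φ p) := by
  induction p using Polynomial.induction_on' with
  | add p q hp hq => rw [map_add, map_add]; exact hp.add hq
  | monomial n a =>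
    have hpow : IsAdjointPair B B ⇑(ψ ^ n) ⇑(φ ^ n) := by
      induction n with
      | zero => exact isAdjointPair_one
      | succ n ih => rw [pow_succ ψ, pow_succ' φ]; exact ih.mul h
    simpa only [aeval_monomial, ← Algebra.smul_def, coe_smul] using hpow.smul a

theorem LinearMap.IsAdjointPair.eq_zero_iff (hB : B.Nondegenerate) (h : IsAdjointPair B B ψ φ) :
    ψ = 0 ↔ φ = 0 := by
  constructor <;> rintro rfl <;> ext v
  · exact hB.2 _ fun u => by rw [← h, zero_apply, map_zero, zero_apply]
  · exact hB.1 _ fun u => by rw [h, zero_apply, map_zero]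

end AdjointPair

section Endomorphism

variable {V : Type} [AddCommGroup V] [Module k V] {B : LinearMap.BilinForm k V}
  {φ ψ : Module.End k V}

theorem IsQuadraticSpace.nondegenerate (hq : IsQuadraticSpace B) : B.Nondegenerate :=
  ⟨hq.2, fun y hy => hq.2 y fun x => hq.1 y x ▸ hy x⟩

theorem IsIsometryOf.isAdjointPair_symm {t : V ≃ₗ[k] V} (ht : IsIsometryOf B t) :
    IsAdjointPair B B t.symm t := fun x y => by
  rw [← ht, t.apply_symm_apply]

theorem LinearEquiv.coe_symm_mul_coe (t : V ≃ₗ[k] V) : (t.symm : Module.End k V) * t = 1 :=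
  LinearMap.ext t.symm_apply_apply

variable [FiniteDimensional k V]

theorem LinearMap.IsAdjointPair.minpoly_eq (hB : B.Nondegenerate) (h : IsAdjointPair B B ψ φ) :
    minpoly k ψ = minpoly k φ := by
  have hiff (p : k[X]) : Polynomial.aeval ψ p = 0 ↔ Polynomial.aeval φ p = 0 :=
    (h.aeval p).eq_zero_iff hB
  exact eq_of_monic_of_associated (minpoly.monic (Algebra.IsIntegral.isIntegral ψ))
    (minpoly.monic (Algebra.IsIntegral.isIntegral φ)) <| associated_of_dvd_dvd
      (minpoly.dvd_iff.mpr ((hiff _).mpr (minpoly.aeval k φ)))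
      (minpoly.dvd_iff.mpr ((hiff _).mp (minpoly.aeval k ψ)))

theorem LinearMap.charpoly_dualMap (f : Module.End k V) : f.dualMap.charpoly = f.charpoly := by
  let b := Module.finBasis k V
  rw [← charpoly_toMatrix f.dualMap b.dualBasis, dualMap_def, toMatrix_transpose,
    Matrix.charpoly_transpose, charpoly_toMatrix]

theorem LinearMap.IsAdjointPair.charpoly_eq (hB : B.Nondegenerate) (h : IsAdjointPair B B ψ φ) :
    ψ.charpoly = φ.charpoly := by
  have hconj : ψ = (B.toDual hB).symm.conj φ.dualMap := by
    ext v
    apply (B.toDual hB).injective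
    ext u
    simp [LinearEquiv.conj_apply, BilinForm.toDual_def, h v u]
  rw [hconj, LinearEquiv.charpoly_conj, charpoly_dualMap]

theorem LinearEquiv.charpoly_symm_dvd_reverse (t : V ≃ₗ[k] V) :
    (t.symm : Module.End k V).charpoly ∣ (t : Module.End k V).charpoly.reverse := by
  let b := Module.finBasis k V
  set A := toMatrix b b t
  have hleft : toMatrix b b t.symm * A = 1 := by
    rw [← toMatrix_mul, t.coe_symm_mul_coe, toMatrix_one]
  have hdet : IsUnit A.det := Matrix.isUnit_det_of_left_inverse hleft
  rw [← charpoly_toMatrix _ b, ← charpoly_toMatrix (t : Module.End k V) b,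
    ← Matrix.inv_eq_left_inv hleft,
    Matrix.charpoly_inv A ((Matrix.isUnit_iff_isUnit_det A).mpr hdet), ← Matrix.reverse_charpoly]
  have hunit : IsUnit ((-1) ^ Fintype.card (Fin (Module.finrank k V)) * C (Ring.inverse A.det)) :=
    (isUnit_neg_one.pow _).mul (isUnit_C.mpr (isUnit_ringInverse.mpr hdet))
  exact hunit.mul_left_dvd.mpr dvd_rfl

theorem LinearEquiv.charpoly_symm (t : V ≃ₗ[k] V) :
    (t.symm : Module.End k V).charpoly = starPoly (t : Module.End k V).charpoly :=
  eq_starPoly_of_dvd_reverse (charpoly_monic _) (charpoly_monic _) t.charpoly_symm_dvd_reverse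
    t.symm.charpoly_symm_dvd_reverse

end Endomorphism

theorem minpoly_charpoly_of_isometry_symmetric_general
    {V : Type} [AddCommGroup V] [Module k V] [FiniteDimensional k V]
    (B : LinearMap.BilinForm k V) (hq : IsQuadraticSpace B)
    (t : V ≃ₗ[k] V) (ht : IsIsometryOf B t) :
    (minpoly k t.toLinearMap =
        Polynomial.C ((minpoly k t.toLinearMap).coeff 0) * (minpoly k t.toLinearMap).reverse ∧
      ((minpoly k t.toLinearMap).coeff 0 = 1 ∨ (minpoly k t.toLinearMap).coeff 0 = -1)) ∧
    (LinearMap.charpoly t.toLinearMap =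
        Polynomial.C ((LinearMap.charpoly t.toLinearMap).coeff 0) *
          (LinearMap.charpoly t.toLinearMap).reverse ∧
      ((LinearMap.charpoly t.toLinearMap).coeff 0 = 1 ∨
        (LinearMap.charpoly t.toLinearMap).coeff 0 = -1)) := by
  have hB := hq.nondegenerate
  have hadj := ht.isAdjointPair_symm
  constructor
  · refine eq_C_mul_reverse_of_starPoly_eq (minpoly.monic (Algebra.IsIntegral.isIntegral _)) ?_
    rw [← minpoly_eq_starPoly_of_mul_eq_one (x := (t : Module.End k V)) t.symm.coe_symm_mul_coe
      t.coe_symm_mul_coe, hadj.minpoly_eq hB]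
  · refine eq_C_mul_reverse_of_starPoly_eq (charpoly_monic _) ?_
    rw [← t.charpoly_symm, hadj.charpoly_eq hB]

/-- The minimal and characteristic polynomials of an isometry of a
quadratic space are `ε`-symmetric, with `ε` the constant term (which is `±1`). -/
theorem minpoly_charpoly_of_isometry_symmetric
    (hchar : (2 : k) ≠ 0)
    {V : Type} [AddCommGroup V] [Module k V] [FiniteDimensional k V]
    (B : LinearMap.BilinForm k V) (hq : IsQuadraticSpace B)
    (t : V ≃ₗ[k] V) (ht : IsIsometryOf B t) :
    (minpoly k t.toLinearMap =
        Polynomial.C ((minpoly k t.toLinearMap).coeff 0) * (minpoly k t.toLinearMap).reverse ∧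
      ((minpoly k t.toLinearMap).coeff 0 = 1 ∨ (minpoly k t.toLinearMap).coeff 0 = -1)) ∧
    (LinearMap.charpoly t.toLinearMap =
        Polynomial.C ((LinearMap.charpoly t.toLinearMap).coeff 0) *
          (LinearMap.charpoly t.toLinearMap).reverse ∧
      ((LinearMap.charpoly t.toLinearMap).coeff 0 = 1 ∨
        (LinearMap.charpoly t.toLinearMap).coeff 0 = -1)) :=
  minpoly_charpoly_of_isometry_symmetric_general B hq t ht

end
end

section
/- Let k be a field of characteristic ≠ 2, let M be a semi-simple module with M⁰ ≠ 0, and let d ∈ k*. Then there exists a quadratic space q over k with det(q) = d in k*/k*² having an isometry with module M. -/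
open Polynomial

noncomputable section

variable {k : Type} [Field k]

/-!
Write `M = ⊕ₚ k[X]/(fₚ)` with `fₚ` irreducible and pair the summands by an involution `p ↦ p'`
with `f_{p'} = fₚ*`, which exists because `M` is self-dual. On the field `Eₚ = k[X]/(fₚ)` the
isometry is multiplication by the root `αₚ`, and `uₚ : E_{p'} → Eₚ` is the `k`-algebra map with
`α_{p'} ↦ αₚ⁻¹`. For weights `c` the form `B_c(v, w) = ∑ₚ cₚ λₚ (vₚ · uₚ w_{p'})` is invariant
under multiplication by the roots. Taking `λₚ = κₚ + κ_{p'} ∘ uₚ⁻¹` with `κₚ 1 = 1` makes it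
symmetric when `c` is constant on pairs, and nondegenerate since `Eₚ` is a field and
`λₚ 1 = 2 ≠ 0`. A summand `k[X]/(X ∓ 1)` is a line fixed by the involution; multiplying its
weight by `u` multiplies the determinant by `u`, so `u = d · det B₁` gives `det B = d (det B₁)²`.
-/

theorem Polynomial.reverse_eq_mirror_of_coeff_zero_ne_zero {f : k[X]} (h0 : f.coeff 0 ≠ 0) :
    f.reverse = f.mirror := by
  rw [mirror, natTrailingDegree_eq_zero.mpr (Or.inr h0), pow_zero, mul_one]

theorem Polynomial.reverse_reverse_of_coeff_zero_ne_zero {f : k[X]} (h0 : f.coeff 0 ≠ 0) :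
    f.reverse.reverse = f := by
  have hf : f ≠ 0 := by rintro rfl; exact h0 (coeff_zero 0)
  rw [reverse_eq_mirror_of_coeff_zero_ne_zero (by rwa [coeff_zero_reverse, leadingCoeff_ne_zero]),
    reverse_eq_mirror_of_coeff_zero_ne_zero h0, mirror_mirror]

theorem coeff_zero_ne_zero_of_starPoly_ne_zero {f : k[X]} (h : starPoly f ≠ 0) :
    f.coeff 0 ≠ 0 := by
  contrapose! h
  simp [starPoly, h]

theorem starPoly_starPoly {f : k[X]} (hm : f.Monic) (h0 : f.coeff 0 ≠ 0) :
    starPoly (starPoly f) = f := by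
  have hcoeff : (starPoly f).coeff 0 = (f.coeff 0)⁻¹ := by
    simp [starPoly, coeff_zero_reverse, hm.leadingCoeff]
  rw [starPoly, hcoeff, inv_inv, starPoly, reverse_mul_of_domain, reverse_C, ← mul_assoc, ← C_mul,
    mul_inv_cancel₀ h0, C_1, one_mul, reverse_reverse_of_coeff_zero_ne_zero h0]

theorem starPoly_X_sub_C {a : k} (ha : a ≠ 0) : starPoly (X - C a) = X - C a⁻¹ := by
  have hX : (X : k[X]).reverse = 1 := by
    rw [← mul_one X, reverse_X_mul, ← C_1, reverse_C]
  rw [starPoly, sub_eq_add_neg, ← C_neg, reverse_add_C, hX]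
  simp only [natDegree_X, pow_one, coeff_add, coeff_X_zero, coeff_C_zero, zero_add]
  rw [mul_add, ← mul_assoc, ← C_mul, inv_mul_cancel₀ (neg_ne_zero.mpr ha), inv_neg, C_1,
    one_mul, mul_one, C_neg]
  ring

theorem aeval_inv_starPoly_eq_zero {A : Type*} [Field A] [Algebra k A] {f : k[X]} {x : A}
    (hx : x ≠ 0) (hf : aeval x f = 0) : aeval x⁻¹ (starPoly f) = 0 := by
  have := invertibleOfNonzero hx
  have hrev : eval₂ (algebraMap k A) (⅟x) f.reverse = 0 := by
    rwa [eval₂_reverse_eq_zero_iff, ← aeval_def]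
  rw [starPoly, map_mul, ← invOf_eq_inv, aeval_def (⅟x) f.reverse, hrev, mul_zero]

section FibreMatching

open Finset

theorem Finset.strictMonoOn_card_filter_lt {α : Type*} [LinearOrder α] (t : Finset α) :
    StrictMonoOn (fun x => #{y ∈ t | y < x}) t := by
  intro x hx y hy hxy
  refine card_lt_card ((ssubset_iff_of_subset ?_).mpr ⟨x, ?_, ?_⟩)
  · intro z hz
    simp only [mem_filter] at hz ⊢
    exact ⟨hz.1, hz.2.trans hxy⟩
  · simpa [mem_filter] using ⟨hx, hxy⟩
  · simp

theorem Finset.image_card_filter_lt {α : Type*} [LinearOrder α] (t : Finset α) :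
    t.image (fun x => #{y ∈ t | y < x}) = range #t := by
  refine eq_of_subset_of_card_le (fun m hm => ?_) ?_
  · obtain ⟨x, hx, rfl⟩ := mem_image.mp hm
    exact mem_range.mpr (card_lt_card (filter_ssubset.mpr ⟨x, hx, lt_irrefl x⟩))
  · rw [card_range, card_image_of_injOn t.strictMonoOn_card_filter_lt.injOn]

theorem exists_involutive_map_fibres {ι β : Type*} [Finite ι] (c : ι → β) (s : β → β)
    (hs : ∀ i, s (s (c i)) = c i) (σ : Equiv.Perm ι) (hσ : ∀ i, c (σ i) = s (c i)) :
    ∃ π : ι → ι, Function.Involutive π ∧ ∀ i, c (π i) = s (c i) ∧ (s (c i) = c i → π i = i) := by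
  classical
  have := Fintype.ofFinite ι
  let _ : LinearOrder ι := LinearOrder.lift' (Fintype.equivFin ι) (Equiv.injective _)
  let fibre (b : β) : Finset ι := {i | c i = b}
  let rank (i : ι) : ℕ := #{j ∈ fibre (c i) | j < i}
  have mem_fibre {i b} : i ∈ fibre b ↔ c i = b := by simp [fibre]
  have rank_injective {i j} (hc : c i = c j) (hr : rank i = rank j) : i = j :=
    (fibre (c i)).strictMonoOn_card_filter_lt.injOn (mem_fibre.mpr rfl) (mem_fibre.mpr hc.symm)
      (by simpa [rank, hc] using hr)
  have card_le (b : β) : #(fibre b) ≤ #(fibre (s b)) :=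
    card_le_card_of_injOn σ (fun i hi => by simp_all [fibre]) σ.injective.injOn
  have exists_partner (i : ι) : ∃ j, c j = s (c i) ∧ rank j = rank i := by
    have hlt : rank i < #(fibre (c i)) := by
      rw [← mem_range, ← image_card_filter_lt]
      exact mem_image_of_mem _ (mem_fibre.mpr rfl)
    have hmem : rank i ∈ (fibre (s (c i))).image fun x => #{y ∈ fibre (s (c i)) | y < x} := by
      rw [image_card_filter_lt, mem_range]
      exact hlt.trans_le (card_le _)
    obtain ⟨j, hj, hjr⟩ := mem_image.mp hmem
    refine ⟨j, mem_fibre.mp hj, ?_⟩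
    simpa [rank, mem_fibre.mp hj] using hjr
  choose π hπc hπr using exists_partner
  have π_eq {i j} (hc : c j = s (c i)) (hr : rank j = rank i) : π i = j :=
    rank_injective (by rw [hπc, hc]) (by rw [hπr, hr])
  exact ⟨π, fun i => π_eq (by rw [hπc, hs]) (hπr i).symm,
    fun i => ⟨hπc i, fun h => π_eq h.symm rfl⟩⟩

end FibreMatching

section InvRoot

open AdjoinRoot

theorem AdjoinRoot.root_ne_zero_of_coeff_zero_ne_zero {f : k[X]} [Fact (Irreducible f)]
    (h0 : f.coeff 0 ≠ 0) : root f ≠ 0 := by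
  intro h
  have := AdjoinRoot.eval₂_root f
  rw [h, eval₂_at_zero, map_eq_zero] at this
  exact h0 this

theorem aeval_inv_root_eq_zero_of_eq_starPoly {f g : k[X]} [Fact (Irreducible f)]
    (h0 : f.coeff 0 ≠ 0) (hg : g = starPoly f) : aeval (root f)⁻¹ g = 0 :=
  hg ▸ aeval_inv_starPoly_eq_zero (root_ne_zero_of_coeff_zero_ne_zero h0) (aeval_eq f ▸ mk_self)

def invRootHom (f g : k[X]) [Fact (Irreducible f)] (h : aeval (root f)⁻¹ g = 0) :
    AdjoinRoot g →ₐ[k] AdjoinRoot f :=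
  liftAlgHom g (Algebra.ofId k _) (root f)⁻¹ h

variable {f g : k[X]} [Fact (Irreducible f)]

theorem invRootHom_aeval_root (h : aeval (root f)⁻¹ g = 0) (q : k[X]) :
    invRootHom f g h (aeval (root g) q) = aeval (root f)⁻¹ q := by
  rw [aeval_eq]; rfl

theorem invRootHom_root (h : aeval (root f)⁻¹ g = 0) : invRootHom f g h (root g) = (root f)⁻¹ :=
  liftAlgHom_root _ _ _ _

theorem invRootHom_aeval_inv_root [Fact (Irreducible g)] (h : aeval (root f)⁻¹ g = 0)
    (q : k[X]) :
    invRootHom f g h (aeval (root g)⁻¹ q) = aeval (root f) q := by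
  rw [← aeval_algHom_apply, map_inv₀, invRootHom_root, inv_inv]

theorem invRootHom_invRootHom [Fact (Irreducible g)] (h : aeval (root f)⁻¹ g = 0)
    (h' : aeval (root g)⁻¹ f = 0) (z : AdjoinRoot f) :
    invRootHom f g h (invRootHom g f h' z) = z := by
  obtain ⟨q, rfl⟩ := mk_surjective z
  rw [← aeval_eq, invRootHom_aeval_root, invRootHom_aeval_inv_root]

def unitDual (f : k[X]) [Fact (Irreducible f)] : Module.Dual k (AdjoinRoot f) :=
  (Module.Projective.exists_dual_eq_one k (one_ne_zero' (AdjoinRoot f))).choose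

theorem unitDual_one (f : k[X]) [Fact (Irreducible f)] : unitDual f 1 = 1 :=
  (Module.Projective.exists_dual_eq_one k (one_ne_zero' (AdjoinRoot f))).choose_spec

end InvRoot

section BilinForm

variable {V W : Type} [AddCommGroup V] [Module k V] [AddCommGroup W] [Module k W]

theorem LinearMap.SeparatingLeft.compl₁₂_linearEquiv {B : LinearMap.BilinForm k W}
    (hB : B.SeparatingLeft) (ψ : V ≃ₗ[k] W) :
    (B.compl₁₂ ψ.toLinearMap ψ.toLinearMap).SeparatingLeft := fun x hx =>
  ψ.map_eq_zero_iff.mp (hB _ fun y => by simpa using hx (ψ.symm y))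

theorem IsQuadraticSpace.compl₁₂ {B : LinearMap.BilinForm k W} (hB : IsQuadraticSpace B)
    (ψ : V ≃ₗ[k] W) : IsQuadraticSpace (B.compl₁₂ ψ.toLinearMap ψ.toLinearMap) :=
  ⟨fun _ _ => hB.1 _ _, LinearMap.SeparatingLeft.compl₁₂_linearEquiv hB.2 ψ⟩

theorem HasIsometryWithModule.compl₁₂ {B : LinearMap.BilinForm k W} {D : ModuleData k}
    (hB : HasIsometryWithModule B D) (ψ : V ≃ₗ[k] W) :
    HasIsometryWithModule (B.compl₁₂ ψ.toLinearMap ψ.toLinearMap) D := by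
  obtain ⟨t, ht, φ, hφ⟩ := hB
  exact ⟨ψ.trans (t.trans ψ.symm), fun x y => by simpa using ht (ψ x) (ψ y), ψ.trans φ,
    fun v => by simpa using hφ (ψ v)⟩

variable [FiniteDimensional k V]

theorem detOf_ne_zero {B : LinearMap.BilinForm k V} (hB : B.SeparatingLeft) : detOf B ≠ 0 :=
  (LinearMap.BilinForm.nondegenerate_iff_det_ne_zero (Module.finBasis k V)).mp
    (.ofSeparatingLeft hB)

theorem detOf_compl₁₂_id (B : LinearMap.BilinForm k V) (g : V →ₗ[k] V) :
    detOf (B.compl₁₂ g LinearMap.id) = LinearMap.det g * detOf B := by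
  rw [detOf, gramOf, LinearMap.toMatrix₂_compl₁₂ (Module.finBasis k V) (Module.finBasis k V),
    LinearMap.toMatrix_id, Matrix.mul_one, Matrix.det_mul, Matrix.det_transpose,
    LinearMap.det_toMatrix, detOf, gramOf]

end BilinForm

theorem LinearMap.det_pi_smul_proj {J : Type} [Fintype J] [DecidableEq J] {E : J → Type}
    [∀ p, AddCommGroup (E p)] [∀ p, Module k (E p)] [∀ p, FiniteDimensional k (E p)]
    (c : J → k) :
    LinearMap.det (LinearMap.pi fun p => c p • LinearMap.proj p : (∀ p, E p) →ₗ[k] ∀ p, E p) =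
      ∏ p, c p ^ Module.finrank k (E p) := by
  let b := Pi.basis fun p => Module.finBasis k (E p)
  have hdiag : LinearMap.toMatrix b b (LinearMap.pi fun p => c p • LinearMap.proj p) =
      Matrix.diagonal fun x => c x.1 := by
    ext ⟨p, i⟩ ⟨q, j⟩
    obtain rfl | hpq := eq_or_ne p q
    · simp [b, LinearMap.toMatrix_apply, Matrix.diagonal_apply, Finsupp.single_apply, eq_comm]
    · simp [b, LinearMap.toMatrix_apply, hpq]
  rw [← LinearMap.det_toMatrix b, hdiag, Matrix.det_diagonal, Fintype.prod_sigma]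
  simp

/-- The data of the semisimple self-dual module `⊕ₚ k[X]/(f p)`, the summands `p` and `dual p`
being put in duality. -/
structure SelfDualFamily (k : Type) [Field k] (J : Type) where
  f : J → k[X]
  irreducible : ∀ p, Irreducible (f p)
  dual : J → J
  dual_involutive : Function.Involutive dual
  f_dual : ∀ p, f (dual p) = starPoly (f p)

namespace SelfDualFamily

open AdjoinRoot

variable {J : Type} (S : SelfDualFamily k J)

instance (p : J) : Fact (Irreducible (S.f p)) := ⟨S.irreducible p⟩

instance (p : J) : FiniteDimensional k (AdjoinRoot (S.f p)) :=
  (powerBasis (S.irreducible p).ne_zero).finite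

abbrev Space : Type := ∀ p, AdjoinRoot (S.f p)

theorem finrank_adjoinRoot (p : J) : Module.finrank k (AdjoinRoot (S.f p)) = (S.f p).natDegree := by
  rw [(powerBasis (S.irreducible p).ne_zero).finrank, powerBasis_dim]

theorem coeff_zero_ne_zero (p : J) : (S.f p).coeff 0 ≠ 0 :=
  coeff_zero_ne_zero_of_starPoly_ne_zero (S.f_dual p ▸ (S.irreducible _).ne_zero)

theorem aeval_inv_root (p : J) : aeval (root (S.f p))⁻¹ (S.f (S.dual p)) = 0 :=
  aeval_inv_root_eq_zero_of_eq_starPoly (S.coeff_zero_ne_zero p) (S.f_dual p)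

theorem aeval_inv_root_dual (p : J) : aeval (root (S.f (S.dual p)))⁻¹ (S.f p) = 0 := by
  simpa only [S.dual_involutive p] using S.aeval_inv_root (S.dual p)

def ofDual (p : J) : AdjoinRoot (S.f (S.dual p)) →ₐ[k] AdjoinRoot (S.f p) :=
  invRootHom _ _ (S.aeval_inv_root p)

def toDual (p : J) : AdjoinRoot (S.f p) →ₐ[k] AdjoinRoot (S.f (S.dual p)) :=
  invRootHom _ _ (S.aeval_inv_root_dual p)

theorem ofDual_toDual (p : J) (z : AdjoinRoot (S.f p)) : S.ofDual p (S.toDual p z) = z :=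
  invRootHom_invRootHom _ _ z

theorem ofDual_dual_apply (v : S.Space) (p : J) :
    S.ofDual (S.dual p) (v (S.dual (S.dual p))) = S.toDual p (v p) := by
  choose q hq using fun p => mk_surjective (v p)
  simp only [← hq, ← aeval_eq, ofDual, toDual, invRootHom_aeval_root, S.dual_involutive p]

def symmFunctional (p : J) : Module.Dual k (AdjoinRoot (S.f p)) :=
  unitDual (S.f p) + unitDual (S.f (S.dual p)) ∘ₗ (S.toDual p).toLinearMap

theorem symmFunctional_one (p : J) : S.symmFunctional p 1 = 2 := by
  simp only [symmFunctional, LinearMap.add_apply, LinearMap.comp_apply, AlgHom.toLinearMap_apply,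
    map_one, unitDual_one]
  norm_num

theorem symmFunctional_dual_mul (p : J) (z : AdjoinRoot (S.f p))
    (w : AdjoinRoot (S.f (S.dual p))) :
    S.symmFunctional (S.dual p) (w * S.toDual p z) = S.symmFunctional p (z * S.ofDual p w) := by
  obtain ⟨a, rfl⟩ := mk_surjective z
  obtain ⟨b, rfl⟩ := mk_surjective w
  simp only [symmFunctional, toDual, ofDual, ← aeval_eq, LinearMap.add_apply, LinearMap.comp_apply,
    AlgHom.toLinearMap_apply, map_mul, invRootHom_aeval_root, invRootHom_aeval_inv_root]
  -- `rw [S.dual_involutive p]` fails here: the motive is not type correct.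
  have hswap : ∀ q, q = p → unitDual (S.f q) (aeval (root (S.f q))⁻¹ b * aeval (root (S.f q)) a) =
      unitDual (S.f p) (aeval (root (S.f p))⁻¹ b * aeval (root (S.f p)) a) := by
    rintro q rfl
    rfl
  rw [hswap _ (S.dual_involutive p), add_comm]
  congr 2 <;> ring

theorem root_ne_zero (p : J) : root (S.f p) ≠ 0 :=
  root_ne_zero_of_coeff_zero_ne_zero (S.coeff_zero_ne_zero p)

def mulRoot : S.Space ≃ₗ[k] S.Space :=
  LinearEquiv.piCongrRight fun p =>
    DistribMulAction.toLinearEquiv k _ (Units.mk0 (root (S.f p)) (S.root_ne_zero p))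

theorem mulRoot_apply (v : S.Space) (p : J) : S.mulRoot v p = root (S.f p) * v p := rfl

variable [Fintype J]

def form (c : J → k) : LinearMap.BilinForm k S.Space :=
  ∑ p, c p • ((LinearMap.mul k _).compr₂ (S.symmFunctional p)).compl₁₂ (LinearMap.proj p)
    ((S.ofDual p).toLinearMap ∘ₗ LinearMap.proj (S.dual p))

theorem form_apply (c : J → k) (v w : S.Space) :
    S.form c v w = ∑ p, c p * S.symmFunctional p (v p * S.ofDual p (w (S.dual p))) := by
  simp [form]

theorem form_comm {c : J → k} (hc : ∀ p, c (S.dual p) = c p) (v w : S.Space) :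
    S.form c v w = S.form c w v := by
  rw [form_apply, form_apply]
  refine Fintype.sum_equiv (S.dual_involutive.toPerm _) _ _ fun p => ?_
  rw [Function.Involutive.coe_toPerm, hc, ofDual_dual_apply, symmFunctional_dual_mul]

theorem form_apply_single [DecidableEq J] (c : J → k) (v : S.Space) (p : J)
    (z : AdjoinRoot (S.f (S.dual p))) :
    S.form c v (Pi.single (S.dual p) z) = c p * S.symmFunctional p (v p * S.ofDual p z) := by
  rw [form_apply, Finset.sum_eq_single p (fun q _ hqp => ?_) (by simp), Pi.single_eq_same]
  rw [Pi.single_eq_of_ne (S.dual_involutive.injective.ne hqp), map_zero, mul_zero, map_zero,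
    mul_zero]

theorem form_separatingLeft {c : J → k} (h2 : (2 : k) ≠ 0) (hc : ∀ p, c p ≠ 0) :
    (S.form c).SeparatingLeft := by
  classical
  intro v hv
  by_contra hne
  obtain ⟨p, hp⟩ := Function.ne_iff.mp hne
  have := hv (Pi.single (S.dual p) (S.toDual p (v p)⁻¹))
  rw [form_apply_single, ofDual_toDual, mul_inv_cancel₀ hp, symmFunctional_one] at this
  exact mul_ne_zero (hc p) h2 this

theorem isQuadraticSpace_form {c : J → k} (h2 : (2 : k) ≠ 0) (hc : ∀ p, c p ≠ 0)
    (hcd : ∀ p, c (S.dual p) = c p) : IsQuadraticSpace (S.form c) :=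
  ⟨S.form_comm hcd, S.form_separatingLeft h2 hc⟩

theorem form_mulRoot (c : J → k) (v w : S.Space) :
    S.form c (S.mulRoot v) (S.mulRoot w) = S.form c v w := by
  simp only [form_apply, mulRoot_apply, map_mul, ofDual, invRootHom_root]
  refine Finset.sum_congr rfl fun p _ => ?_
  rw [mul_mul_mul_comm, mul_inv_cancel₀ (S.root_ne_zero p), one_mul]

theorem form_eq_compl₁₂ (c : J → k) :
    S.form c = (S.form 1).compl₁₂ (LinearMap.pi fun p => c p • LinearMap.proj p) LinearMap.id := by
  ext v w
  simp [form_apply]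

theorem detOf_compl₁₂_form [DecidableEq J] {V : Type} [AddCommGroup V] [Module k V]
    [FiniteDimensional k V] (ψ : V ≃ₗ[k] S.Space) (c : J → k) :
    detOf ((S.form c).compl₁₂ ψ.toLinearMap ψ.toLinearMap) =
      (∏ p, c p ^ (S.f p).natDegree) * detOf ((S.form 1).compl₁₂ ψ.toLinearMap ψ.toLinearMap) := by
  have hconj : (S.form c).compl₁₂ ψ.toLinearMap ψ.toLinearMap =
      ((S.form 1).compl₁₂ ψ.toLinearMap ψ.toLinearMap).compl₁₂
        (ψ.symm.toLinearMap ∘ₗ (LinearMap.pi fun p => c p • LinearMap.proj p) ∘ₗ ψ.toLinearMap)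
        LinearMap.id := by
    rw [form_eq_compl₁₂]
    ext v w
    simp
  have hdet := LinearMap.det_conj (LinearMap.pi fun p => c p • LinearMap.proj p) ψ.symm
  rw [ψ.symm_symm] at hdet
  simp only [hconj, detOf_compl₁₂_id, hdet, LinearMap.det_pi_smul_proj, finrank_adjoinRoot]

theorem exists_weights_detOf_eq {V : Type} [AddCommGroup V] [Module k V] [FiniteDimensional k V]
    (ψ : V ≃ₗ[k] S.Space) (h2 : (2 : k) ≠ 0) {p₀ : J} (hp₀ : S.dual p₀ = p₀)
    (hdeg : (S.f p₀).natDegree = 1) {d : k} (hd : d ≠ 0) :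
    ∃ c : J → k, (∀ p, c p ≠ 0) ∧ (∀ p, c (S.dual p) = c p) ∧
      ∃ e : k, e ≠ 0 ∧ detOf ((S.form c).compl₁₂ ψ.toLinearMap ψ.toLinearMap) = d * e ^ 2 := by
  classical
  set δ := detOf ((S.form 1).compl₁₂ ψ.toLinearMap ψ.toLinearMap)
  have hδ : δ ≠ 0 :=
    detOf_ne_zero ((S.form_separatingLeft (c := 1) h2 fun _ => one_ne_zero).compl₁₂_linearEquiv ψ)
  have hdual_eq_iff (p : J) : S.dual p = p₀ ↔ p = p₀ := by
    rw [← hp₀, S.dual_involutive.injective.eq_iff, hp₀]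
  refine ⟨Pi.mulSingle p₀ (d * δ), fun p => ?_, fun p => ?_, δ, hδ, ?_⟩
  · rw [Pi.mulSingle_apply]
    split_ifs
    exacts [mul_ne_zero hd hδ, one_ne_zero]
  · simp only [Pi.mulSingle_apply, hdual_eq_iff]
  · rw [detOf_compl₁₂_form, Finset.prod_eq_single p₀
      (fun p _ hp => by rw [Pi.mulSingle_eq_of_ne hp, one_pow]) (by simp),
      Pi.mulSingle_eq_same, hdeg, pow_one]
    ring

end SelfDualFamily

namespace ModuleData

variable (D : ModuleData k)

theorem coeff_zero_ne_zero (i : D.ι) : (D.f i).coeff 0 ≠ 0 := by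
  obtain ⟨σ, hσ⟩ := D.selfdual
  exact coeff_zero_ne_zero_of_starPoly_ne_zero ((hσ i).1 ▸ (D.monic (σ i)).ne_zero)

theorem exists_selfDualFamily :
    ∃ S : SelfDualFamily k (Σ i, Fin (D.n i)), (∀ p, S.f p = D.f p.1) ∧
      ∀ p, starPoly (D.f p.1) = D.f p.1 → S.dual p = p := by
  obtain ⟨σ, hσ⟩ := D.selfdual
  obtain ⟨π, hπ, hπf⟩ :=
    exists_involutive_map_fibres (fun p : Σ i, Fin (D.n i) => D.f p.1) starPoly
    (fun p => starPoly_starPoly (D.monic p.1) (D.coeff_zero_ne_zero p.1))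
    (Equiv.sigmaCongr σ fun i => finCongr (hσ i).2.2.symm) (fun p => (hσ p.1).1)
  exact ⟨⟨fun p => D.f p.1, fun p => D.irr p.1, π, hπ, fun p => (hπf p).1⟩, fun _ => rfl,
    fun p => (hπf p).2⟩

theorem finrank_spaceVia : Module.finrank k (D.SpaceVia (RingHom.id k)) = D.dim := by
  have (i : D.ι) : Module.Finite k (k[X] ⧸ Ideal.span {((D.f i).map (RingHom.id k)) ^ D.e i}) :=
    (AdjoinRoot.powerBasis' (((D.monic i).map _).pow _)).finite
  simp [ModuleData.dim, Module.finrank_pi_fintype, finrank_quotient_span_eq_natDegree,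
    natDegree_pow]

theorem exists_linearEquiv_spaceVia (hss : D.Semisimple)
    (S : SelfDualFamily k (Σ i, Fin (D.n i))) (hS : ∀ p, S.f p = D.f p.1) :
    ∃ Φ : S.Space ≃ₗ[k] D.SpaceVia (RingHom.id k), ∀ v, Φ (S.mulRoot v) = (X : k[X]) • Φ v := by
  let ξ (p : Σ i, Fin (D.n i)) :
      AdjoinRoot (S.f p) ≃ₐ[k] k[X] ⧸ Ideal.span {((D.f p.1).map (RingHom.id k)) ^ D.e p.1} :=
    Ideal.quotientEquivAlgOfEq k (by rw [Polynomial.map_id, hss, pow_one, hS])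
  refine ⟨(LinearEquiv.piCongrRight fun p => (ξ p).toLinearEquiv).trans
    (LinearEquiv.piCurry k fun i (_ : Fin (D.n i)) =>
      k[X] ⧸ Ideal.span {((D.f i).map (RingHom.id k)) ^ D.e i}), fun v => ?_⟩
  ext i m
  change ξ ⟨i, m⟩ (AdjoinRoot.root _ * v ⟨i, m⟩) = (X : k[X]) • ξ ⟨i, m⟩ (v ⟨i, m⟩)
  obtain ⟨q, hq⟩ := AdjoinRoot.mk_surjective (v ⟨i, m⟩)
  rw [← hq]
  exact (Submodule.Quotient.mk_smul _ (X : k[X]) q).symm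

theorem starPoly_f_of_isIdx0 {i : D.ι} (h : D.IsIdx0 i) : starPoly (D.f i) = D.f i := by
  rcases h with h | h <;> rw [h]
  · simpa using starPoly_X_sub_C (one_ne_zero (α := k))
  · simpa [sub_eq_add_neg] using starPoly_X_sub_C (neg_ne_zero.mpr (one_ne_zero (α := k)))

theorem natDegree_f_of_isIdx0 {i : D.ι} (h : D.IsIdx0 i) : (D.f i).natDegree = 1 := by
  rcases h with h | h <;> rw [h]
  · simpa using natDegree_X_sub_C (1 : k)
  · simpa using natDegree_X_add_C (1 : k)

end ModuleData

/-- **Cor. 4.6.** If `M` is a semi-simple module with `M⁰ ≠ 0` and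
`d ∈ k*`, there is a quadratic space of determinant `d` (in `k*/k*²`) having an
isometry with module `M`. -/
theorem exists_quadraticSpace_det_hasIsometryWithModule
    (hchar : (2 : k) ≠ 0)
    (D : ModuleData k) (hss : D.Semisimple) (hM0 : ∃ i, D.IsIdx0 i)
    (d : k) (hd : d ≠ 0) :
    ∃ B : LinearMap.BilinForm k (Fin D.dim → k), IsQuadraticSpace B ∧
      (∃ c : k, c ≠ 0 ∧ detOf B = d * c ^ 2) ∧ HasIsometryWithModule B D := by
  obtain ⟨S, hSf, hSdual⟩ := D.exists_selfDualFamily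
  obtain ⟨Φ, hΦ⟩ := D.exists_linearEquiv_spaceVia hss S hSf
  let ψ : (Fin D.dim → k) ≃ₗ[k] S.Space :=
    LinearEquiv.ofFinrankEq _ _ (by rw [Module.finrank_fin_fun, Φ.finrank_eq, D.finrank_spaceVia])
  obtain ⟨i₀, hi₀⟩ := hM0
  let p₀ : Σ i, Fin (D.n i) := ⟨i₀, ⟨0, D.npos i₀⟩⟩
  obtain ⟨c, hc0, hcd, e, he, hdet⟩ := S.exists_weights_detOf_eq ψ hchar
    (hSdual p₀ (D.starPoly_f_of_isIdx0 hi₀)) (by rw [hSf]; exact D.natDegree_f_of_isIdx0 hi₀) hd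
  exact ⟨_, (S.isQuadraticSpace_form hchar hc0 hcd).compl₁₂ ψ, ⟨e, he, hdet⟩,
    HasIsometryWithModule.compl₁₂ ⟨S.mulRoot, S.form_mulRoot c, Φ, hΦ⟩ ψ⟩

end
end

section
/- Let (V,q) be a quadratic space over a field k of characteristic ≠ 2, let t be an isometry of (V,q) and let F ∈ k[X] be the characteristic polynomial of t. Then det(q)·F(1)·F(−1) is a square in k (i.e. det(q)·F(1)·F(−1) ∈ k² = {a² : a ∈ k}, possibly 0). -/
open Polynomial

noncomputable section

variable {k : Type} [Field k]

/-!
With `G` the Gram matrix of `B` and `T` the matrix of `t`, the isometry condition reads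
`Tᵀ G T = G`, so `det T = ±1`. If `det T = -1`, taking determinants in
`Tᵀ G (-1 - T) = (-1 - T)ᵀ G` gives `F(-1) = 0`. If `det T = 1`, the matrix `G T - Tᵀ G` is
skew-symmetric and `(G T - Tᵀ G) T = G (1 - T) (-1 - T)`, so `det G · F(1) · F(-1)` is the
determinant of a skew-symmetric matrix, hence a square: splitting off a nonzero `2 × 2` block,
the Schur complement is again skew-symmetric.
-/

namespace Matrix

theorem inv_neg_of_det_ne_zero {ι : Type*} [Fintype ι] [DecidableEq ι] {A : Matrix ι ι k}
    (hA : A.det ≠ 0) : (-A)⁻¹ = -A⁻¹ := by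
  refine inv_eq_left_inv ?_
  rw [neg_mul_neg, nonsing_inv_mul _ (isUnit_iff_ne_zero.mpr hA)]

theorem diag_eq_zero_of_transpose_eq_neg (h2 : (2 : k) ≠ 0) {ι : Type*} {A : Matrix ι ι k}
    (hA : Aᵀ = -A) (i : ι) : A i i = 0 := by
  have h : A i i = -A i i := congrFun (congrFun hA i) i
  exact (mul_eq_zero.mp (by linear_combination h : (2 : k) * A i i = 0)).resolve_left h2

theorem transpose_schur_eq_neg {m n : Type*} [Fintype m] [DecidableEq m] [Fintype n]
    {M : Matrix (m ⊕ n) (m ⊕ n) k} (hM : Mᵀ = -M) (hdet : M.toBlocks₁₁.det ≠ 0) :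
    (M.toBlocks₂₂ - M.toBlocks₂₁ * M.toBlocks₁₁⁻¹ * M.toBlocks₁₂)ᵀ =
      -(M.toBlocks₂₂ - M.toBlocks₂₁ * M.toBlocks₁₁⁻¹ * M.toBlocks₁₂) := by
  have hblocks : ∀ i j, M j i = -M i j := fun i j => congrFun (congrFun hM i) j
  have h₁₁ : M.toBlocks₁₁ᵀ = -M.toBlocks₁₁ := by ext; exact hblocks _ _
  have h₁₂ : M.toBlocks₁₂ᵀ = -M.toBlocks₂₁ := by ext; exact hblocks _ _
  have h₂₁ : M.toBlocks₂₁ᵀ = -M.toBlocks₁₂ := by ext; exact hblocks _ _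
  have h₂₂ : M.toBlocks₂₂ᵀ = -M.toBlocks₂₂ := by ext; exact hblocks _ _
  rw [transpose_sub, transpose_mul, transpose_mul, transpose_nonsing_inv, h₁₁, h₁₂, h₂₁, h₂₂,
    inv_neg_of_det_ne_zero hdet]
  simp only [Matrix.neg_mul, Matrix.mul_neg, neg_neg, sub_neg_eq_add, Matrix.mul_assoc]
  abel

def finTwoSumSubtypeEquiv {ι : Type*} {i j : ι} (hij : i ≠ j) :
    Fin 2 ⊕ {x // x ≠ i ∧ x ≠ j} ≃ ι :=
  Equiv.ofBijective (Sum.elim ![i, j] Subtype.val) <| by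
    refine ⟨(injective_pair_iff_ne.mpr hij).sumElim Subtype.val_injective ?_, ?_⟩
    · rintro a ⟨b, hbi, hbj⟩ h
      fin_cases a
      exacts [hbi h.symm, hbj h.symm]
    · intro x
      by_cases hi : x = i
      · exact ⟨.inl 0, by simp [hi]⟩
      by_cases hj : x = j
      · exact ⟨.inl 1, by simp [hj]⟩
      exact ⟨.inr ⟨x, hi, hj⟩, rfl⟩

@[simp]
theorem finTwoSumSubtypeEquiv_apply_inl {ι : Type*} {i j : ι} (hij : i ≠ j)
    (a : Fin 2) : finTwoSumSubtypeEquiv hij (.inl a) = ![i, j] a :=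
  rfl

theorem isSquare_det_of_transpose_eq_neg (h2 : (2 : k) ≠ 0) {ι : Type*} [Fintype ι]
    [DecidableEq ι] (A : Matrix ι ι k) (hA : Aᵀ = -A) : IsSquare A.det := by
  induction hcard : Fintype.card ι using Nat.strong_induction_on generalizing ι with
  | _ n ih =>
  by_cases hzero : A = 0
  · rcases isEmpty_or_nonempty ι with hι | hι
    · exact det_isEmpty (A := A) ▸ IsSquare.one
    · rw [hzero, det_zero]
      exact IsSquare.zero
  obtain ⟨i, j, hij⟩ : ∃ i j, A i j ≠ 0 := by
    by_contra! h
    exact hzero (ext h)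
  have hne : i ≠ j := by
    rintro rfl
    exact hij (diag_eq_zero_of_transpose_eq_neg h2 hA i)
  let e := finTwoSumSubtypeEquiv hne
  let M := A.submatrix e e
  have hM : Mᵀ = -M := by
    ext a b
    exact congrFun (congrFun hA (e a)) (e b)
  have h₁₁ : M.toBlocks₁₁.det = A i j ^ 2 := by
    have hji : A j i = -A i j := congrFun (congrFun hA i) j
    simp only [M, e, det_fin_two, toBlocks₁₁, of_apply, submatrix_apply,
      finTwoSumSubtypeEquiv_apply_inl, cons_val_zero, cons_val_one, cons_val_fin_one,
      diag_eq_zero_of_transpose_eq_neg h2 hA, hji]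
    ring
  have hdet : M.toBlocks₁₁.det ≠ 0 := h₁₁ ▸ pow_ne_zero 2 hij
  let := invertibleOfIsUnitDet _ (isUnit_iff_ne_zero.mpr hdet)
  have hlt : Fintype.card {x // x ≠ i ∧ x ≠ j} < n := by
    have := Fintype.card_congr e
    simp only [Fintype.card_sum, Fintype.card_fin] at this
    omega
  obtain ⟨r, hr⟩ := ih _ hlt _ (transpose_schur_eq_neg hM hdet) rfl
  refine ⟨A i j * r, ?_⟩
  calc A.det = M.det := (det_submatrix_equiv_self e A).symm
    _ = M.toBlocks₁₁.det * (M.toBlocks₂₂ - M.toBlocks₂₁ * ⅟M.toBlocks₁₁ * M.toBlocks₁₂).det := by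
      rw [← det_fromBlocks₁₁, fromBlocks_toBlocks]
    _ = A i j * r * (A i j * r) := by
      rw [invOf_eq_nonsing_inv, h₁₁, hr]
      ring

section Isometry

variable {ι : Type*} [Fintype ι] [DecidableEq ι] {G T : Matrix ι ι k}

theorem det_eq_one_or_neg_one_of_transpose_mul_mul_eq (hG : G.det ≠ 0) (hT : Tᵀ * G * T = G) :
    T.det = 1 ∨ T.det = -1 := by
  have h := congrArg det hT
  rw [det_mul, det_mul, det_transpose] at h
  exact mul_self_eq_one_iff.mp (mul_right_cancel₀ hG (by linear_combination h))

theorem det_neg_one_sub_eq_zero_of_det_eq_neg_one (h2 : (2 : k) ≠ 0) (hG : G.det ≠ 0)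
    (hT : Tᵀ * G * T = G) (hdet : T.det = -1) : (-1 - T).det = 0 := by
  have key : Tᵀ * G * (-1 - T) = (-1 - T)ᵀ * G := by
    rw [Matrix.mul_sub, hT, transpose_sub, transpose_neg, transpose_one, Matrix.sub_mul,
      Matrix.mul_neg, Matrix.mul_one, Matrix.neg_mul, Matrix.one_mul]
    abel
  have h := congrArg det key
  rw [det_mul, det_mul, det_mul, det_transpose, det_transpose, hdet] at h
  have h' : (2 * G.det) * (-1 - T).det = 0 := by linear_combination -h
  exact (mul_eq_zero.mp h').resolve_left (mul_ne_zero h2 hG)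

theorem isSquare_det_mul_det_one_sub_mul_det_neg_one_sub_of_det_eq_one (h2 : (2 : k) ≠ 0)
    (hGsymm : Gᵀ = G) (hT : Tᵀ * G * T = G) (hdet : T.det = 1) :
    IsSquare (G.det * ((1 - T).det * (-1 - T).det)) := by
  have hskew : (G * T - Tᵀ * G)ᵀ = -(G * T - Tᵀ * G) := by
    rw [transpose_sub, transpose_mul, transpose_mul, transpose_transpose, hGsymm, neg_sub]
  have hfactor : (G * T - Tᵀ * G) * T = G * ((1 - T) * (-1 - T)) := by
    rw [Matrix.sub_mul, hT]
    noncomm_ring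
  have h := congrArg det hfactor
  rw [det_mul, hdet, mul_one, det_mul, det_mul] at h
  exact h ▸ isSquare_det_of_transpose_eq_neg h2 _ hskew

theorem isSquare_det_mul_eval_charpoly_one_mul_eval_neg_one (h2 : (2 : k) ≠ 0)
    (hGsymm : Gᵀ = G) (hG : G.det ≠ 0) (hT : Tᵀ * G * T = G) :
    IsSquare (G.det * (T.charpoly.eval 1 * T.charpoly.eval (-1))) := by
  rw [eval_charpoly, eval_charpoly, map_one, map_neg, map_one]
  rcases det_eq_one_or_neg_one_of_transpose_mul_mul_eq hG hT with hdet | hdet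
  · exact isSquare_det_mul_det_one_sub_mul_det_neg_one_sub_of_det_eq_one h2 hGsymm hT hdet
  · rw [det_neg_one_sub_eq_zero_of_det_eq_neg_one h2 hG hT hdet, mul_zero, mul_zero]
    exact IsSquare.zero

end Isometry

end Matrix

open Matrix

section Gram

variable {V : Type} [AddCommGroup V] [Module k V] [FiniteDimensional k V]
  {B : LinearMap.BilinForm k V}

theorem gramOf_transpose (hB : ∀ x y, B x y = B y x) : (gramOf B)ᵀ = gramOf B := by
  ext i j
  exact hB _ _

theorem det_gramOf_ne_zero (hB : ∀ x, (∀ y, B x y = 0) → x = 0) : (gramOf B).det ≠ 0 :=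
  (LinearMap.separatingLeft_iff_det_ne_zero _).mp hB

theorem transpose_toMatrix_mul_gramOf_mul_toMatrix {t : V ≃ₗ[k] V} (ht : IsIsometryOf B t) :
    (LinearMap.toMatrix (Module.finBasis k V) (Module.finBasis k V) t)ᵀ * gramOf B *
      LinearMap.toMatrix (Module.finBasis k V) (Module.finBasis k V) t = gramOf B := by
  have hcompl : B.compl₁₂ t.toLinearMap t.toLinearMap = B := by
    ext x y
    exact ht x y
  rw [gramOf, ← LinearMap.toMatrix₂_compl₁₂, hcompl]

end Gram

/-- **Prop. 5.1.** If `t` is an isometry of a quadratic space `q` with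
characteristic polynomial `F`, then `det(q)·F(1)·F(−1)` is a square in `k`. -/
theorem det_mul_charpoly_eval_isSquare
    (hchar : (2 : k) ≠ 0)
    {V : Type} [AddCommGroup V] [Module k V] [FiniteDimensional k V]
    (B : LinearMap.BilinForm k V) (hq : IsQuadraticSpace B)
    (t : V ≃ₗ[k] V) (ht : IsIsometryOf B t) :
    IsSquare (detOf B *
      ((LinearMap.charpoly t.toLinearMap).eval 1 *
        (LinearMap.charpoly t.toLinearMap).eval (-1))) := by
  rw [detOf, ← LinearMap.charpoly_toMatrix t.toLinearMap (Module.finBasis k V)]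
  exact isSquare_det_mul_eval_charpoly_one_mul_eval_neg_one hchar (gramOf_transpose hq.1)
    (det_gramOf_ne_zero hq.2) (transpose_toMatrix_mul_gramOf_mul_toMatrix ht)

end
end
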